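/- Under the hypotheses of the affine feedback trading model with GBM price (drift μ, volatility σ > 0), gain K > 0, initial investment u_0 > 0, initial account value V_0 > 0 with u_0 ≤ K·V_0, and stop price 0 < S_* < S_0: the account value V(t) = V_0 + g(t) satisfies V(t) ≥ 0 for all t ≥ 0 almost surely, where g(t) = (u_0/K)((S̃(t)/S_0)^K e^{(1/2)σ²(K−K²)t} − 1) and S̃ is S stopped at S_*. -/

import Mathlib

/-!
The price factor `(S̃(t)/S₀)^K e^{σ²(K−K²)t/2}` is nonnegative, so the gain never falls below
`-u₀/K`, and `u₀ ≤ K V₀` says the initial account value covers exactly this worst-case loss.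
-/

open MeasureTheory ProbabilityTheory

lemma add_div_mul_sub_one_nonneg {u K V x : ℝ} (hu : 0 ≤ u) (hK : 0 < K) (huK : u ≤ K * V)
    (hx : 0 ≤ x) : 0 ≤ V + u / K * (x - 1) := by
  have hcover : u / K ≤ V := (div_le_iff₀ hK).2 (by linarith)
  have hloss : -(u / K) ≤ u / K * (x - 1) := by nlinarith [div_nonneg hu hK.le]
  linarith

theorem stmt_16_general {Ω : Type*} [MeasurableSpace Ω] (P : Measure Ω)
    (W : ℝ → Ω → ℝ)
    (μ σ S0 u0 K V0 : ℝ) (hS0 : 0 < S0)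
    (hu0 : 0 < u0) (hK : 0 < K) (huK : u0 ≤ K * V0)
    (S : ℝ → Ω → ℝ)
    (hS : ∀ t ω, S t ω = S0 * Real.exp ((μ - σ ^ 2 / 2) * t + σ * W t ω))
    (tstar : Ω → ℝ)
    (Stilde : ℝ → Ω → ℝ) (hStilde : ∀ t ω, Stilde t ω = S (min t (tstar ω)) ω)
    (g : ℝ → Ω → ℝ)
    (hg : ∀ t ω, g t ω
      = u0 / K * ((Stilde t ω / S0) ^ K * Real.exp (1 / 2 * σ ^ 2 * (K - K ^ 2) * t) - 1)) :
    ∀ᵐ ω ∂P, ∀ t : ℝ, 0 ≤ t → 0 ≤ V0 + g t ω := by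
  refine ae_of_all P fun ω t _ => ?_
  have hStilde_pos : 0 < Stilde t ω := by
    rw [hStilde, hS]
    positivity
  rw [hg]
  exact add_div_mul_sub_one_nonneg hu0.le hK huK (by positivity)

/-- Survivability, Lemma 7.1: in the affine feedback model with GBM price,
gain `K > 0`, `u₀ > 0`, `V₀ > 0`, `u₀ ≤ K·V₀` and stop price `0 < S_* < S₀`, the account
value `V(t) = V₀ + g(t)` satisfies `V(t) ≥ 0` for all `t ≥ 0` almost surely, where
`g(t) = (u₀/K)((S̃(t)/S₀)^K e^{(1/2)σ²(K−K²)t} − 1)` and `S̃` is `S` stopped at `S_*`. -/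
theorem stmt_16 {Ω : Type*} [MeasurableSpace Ω] (P : Measure Ω) [IsProbabilityMeasure P]
    (W : ℝ → Ω → ℝ)
    (hW0 : ∀ ω, W 0 ω = 0)
    (hWcont : ∀ ω, Continuous fun t => W t ω)
    (hWmeas : ∀ t, Measurable (W t))
    (hWgauss : ∀ s t : ℝ, 0 ≤ s → s ≤ t →
      Measure.map (fun ω => W t ω - W s ω) P = gaussianReal 0 (Real.toNNReal (t - s)))
    (hWindep : ∀ (n : ℕ) (τ : Fin (n + 1) → ℝ), Monotone τ →
      iIndepFun
        (fun (i : Fin n) ω => W (τ i.succ) ω - W (τ i.castSucc) ω) P)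
    (μ σ S0 Sstar u0 K V0 : ℝ) (hσ : 0 < σ) (hS0 : 0 < S0) (hSstar : 0 < Sstar)
    (hSs : Sstar < S0) (hu0 : 0 < u0) (hK : 0 < K) (hV0 : 0 < V0) (huK : u0 ≤ K * V0)
    (S : ℝ → Ω → ℝ)
    (hS : ∀ t ω, S t ω = S0 * Real.exp ((μ - σ ^ 2 / 2) * t + σ * W t ω))
    (tstar : Ω → ℝ) (htstar : ∀ ω, tstar ω = sInf {t : ℝ | 0 ≤ t ∧ S t ω ≤ Sstar})
    (Stilde : ℝ → Ω → ℝ) (hStilde : ∀ t ω, Stilde t ω = S (min t (tstar ω)) ω)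
    (g : ℝ → Ω → ℝ)
    (hg : ∀ t ω, g t ω
      = u0 / K * ((Stilde t ω / S0) ^ K * Real.exp (1 / 2 * σ ^ 2 * (K - K ^ 2) * t) - 1)) :
    ∀ᵐ ω ∂P, ∀ t : ℝ, 0 ≤ t → 0 ≤ V0 + g t ω :=
  stmt_16_general P W μ σ S0 u0 K V0 hS0 hu0 hK huK S hS tstar Stilde hStilde g hg
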